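/- arXiv:1903.01964 — 4 statements merged into one kernel-verified Lean document; each statement's English description precedes it below -/
import Mathlib

section
/- In a bipolar ABA framework F = (ℒ, ℛ, 𝒜, ¯), all minimal attacks are by singleton sets: if A ⊆ 𝒜 minimally attacks B ⊆ 𝒜, then A = {α} for some α ∈ 𝒜. -/
/-- An ABA framework over a type `S` of sentences (the language `ℒ` is all of `S`).
A rule `(φ, body) ∈ Rules` stands for `φ ← body` (head `φ`, body a list of sentences;
an empty body is the rule `φ ← ⊤`). -/
structure ABA (S : Type*) where
  Rules : Set (S × List S)
  Asms : Set S
  contrary : S → S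
  asms_nonempty : Asms.Nonempty

namespace ABA

variable {S : Type*}

/-- A framework is bipolar iff every rule has the form `φ ← α` with `α` an assumption
and `φ` either an assumption or the contrary of an assumption. -/
def Bipolar (F : ABA S) : Prop :=
  ∀ r ∈ F.Rules, ∃ α ∈ F.Asms, r.2 = [α] ∧
    (r.1 ∈ F.Asms ∨ ∃ β ∈ F.Asms, r.1 = F.contrary β)

/-- `F.Deduces A R φ` : there is a deduction tree for `φ` whose leaves are labelled by `⊤`
or by assumptions (`A` being the set of all such leaf assumptions), and each non-leaf `ψ`
has children labelled by the body of some `ψ`-headed rule (`R` being the set of rules used). -/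
inductive Deduces (F : ABA S) : Set S → Set (S × List S) → S → Prop
  | assumption {α : S} (h : α ∈ F.Asms) : Deduces F {α} ∅ α
  | step {φ : S} {body : List S} (hr : (φ, body) ∈ F.Rules)
      (As : Fin body.length → Set S) (Rs : Fin body.length → Set (S × List S))
      (hd : ∀ i : Fin body.length, Deduces F (As i) (Rs i) (body.get i)) :
      Deduces F (⋃ i, As i) (insert (φ, body) (⋃ i, Rs i)) φ

/-- `A` attacks `B` iff there is a deduction `A' ⊢^R β̄` with `β ∈ B`, `A' ⊆ A`, `R ⊆ ℛ`. -/
def Attacks (F : ABA S) (A B : Set S) : Prop :=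
  ∃ β ∈ B, ∃ A' ⊆ A, ∃ R ⊆ F.Rules, F.Deduces A' R (F.contrary β)

/-- Closure: `Cl(A) = {α ∈ 𝒜 : ∃ A' ⊆ A, R ⊆ ℛ with A' ⊢^R α}`. -/
def Cl (F : ABA S) (A : Set S) : Set S :=
  {α ∈ F.Asms | ∃ A' ⊆ A, ∃ R ⊆ F.Rules, F.Deduces A' R α}

def Closed (F : ABA S) (A : Set S) : Prop := F.Cl A = A

def ConflictFree (F : ABA S) (A : Set S) : Prop := ¬ F.Attacks A A

/-- `A` defends `α` iff every closed `B ⊆ 𝒜` attacking `{α}` is attacked by `A`. -/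
def Defends (F : ABA S) (A : Set S) (α : S) : Prop :=
  ∀ B ⊆ F.Asms, F.Closed B → F.Attacks B {α} → F.Attacks A B

/-- `E ⊆ 𝒜` is admissible iff it is closed, conflict-free and defends itself. -/
def Admissible (F : ABA S) (E : Set S) : Prop :=
  E ⊆ F.Asms ∧ F.Closed E ∧ F.ConflictFree E ∧ ∀ α ∈ E, F.Defends E α

/-- `E` is preferred iff it is ⊆-maximally admissible. -/
def Preferred (F : ABA S) (E : Set S) : Prop :=
  F.Admissible E ∧ ∀ E', F.Admissible E' → E ⊆ E' → E' = E

/-- `E ⊆ 𝒜` is set-stable iff it is closed, conflict-free and attacks `Cl({α})`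
for every `α ∈ 𝒜 \ E`. -/
def SetStable (F : ABA S) (E : Set S) : Prop :=
  E ⊆ F.Asms ∧ F.Closed E ∧ F.ConflictFree E ∧
    ∀ α ∈ F.Asms \ E, F.Attacks E (F.Cl {α})

/-- `A` minimally attacks `B` iff `A` attacks `B` and no proper subset of `A` attacks `B`. -/
def MinAttacks (F : ABA S) (A B : Set S) : Prop :=
  F.Attacks A B ∧ ∀ A' ⊂ A, ¬ F.Attacks A' B

end ABA

/-! Every rule of a bipolar framework has a single assumption as its body, so a deduction is a
chain of rules hanging from one assumption. Hence an attack is always made by a single assumption,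
and minimality leaves no room for anything else in the attacking set. -/

namespace ABA

variable {S : Type*} {F : ABA S}

theorem Bipolar.exists_eq_singleton_of_deduces (hF : F.Bipolar) {A : Set S}
    {R : Set (S × List S)} {φ : S} (hd : F.Deduces A R φ) : ∃ α ∈ F.Asms, A = {α} := by
  induction hd with
  | assumption hα => exact ⟨_, hα, rfl⟩
  | @step _ _ hr As _ _ ih =>
    obtain ⟨α, -, rfl, -⟩ := hF _ hr
    obtain ⟨γ, hγ, hAs⟩ := ih 0
    exact ⟨γ, hγ, by rw [← hAs]; exact iSup_unique (ι := Fin 1) As⟩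

theorem MinAttacks.eq_of_subset_of_attacks {A A' B : Set S} (hmin : F.MinAttacks A B)
    (hA' : A' ⊆ A) (hatt : F.Attacks A' B) : A' = A := by
  by_contra hne
  exact hmin.2 A' (hA'.ssubset_of_ne hne) hatt

end ABA

theorem bipolar_min_attack_singleton_general {S : Type*} (F : ABA S) (hF : F.Bipolar)
    (A B : Set S)
    (h : F.MinAttacks A B) :
    ∃ α ∈ F.Asms, A = {α} := by
  obtain ⟨β, hβ, A', hA', R, hR, hd⟩ := h.1
  obtain ⟨α, hα, rfl⟩ := hF.exists_eq_singleton_of_deduces hd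
  exact ⟨α, hα, (h.eq_of_subset_of_attacks hA' ⟨β, hβ, {α}, subset_rfl, R, hR, hd⟩).symm⟩

/-- In a bipolar ABA framework, all minimal attacks are by singleton sets. -/
theorem bipolar_min_attack_singleton {S : Type*} (F : ABA S) (hF : F.Bipolar)
    (A B : Set S) (hA : A ⊆ F.Asms) (hB : B ⊆ F.Asms)
    (h : F.MinAttacks A B) :
    ∃ α ∈ F.Asms, A = {α} :=
  bipolar_min_attack_singleton_general F hF A B h
end

section
/- In a bipolar ABA framework F = (ℒ, ℛ, 𝒜, ¯), if A ⊆ 𝒜 attacks B ⊆ 𝒜, then there exists an assumption α ∈ A such that the singleton {α} attacks B. -/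
namespace ABA

variable {S : Type*}

/-- Every rule body of a bipolar framework is a single assumption, so deduction trees are
chains. -/
theorem Deduces.eq_singleton_of_bipolar {F : ABA S} (hF : F.Bipolar) {A : Set S}
    {R : Set (S × List S)} {φ : S} (h : F.Deduces A R φ) : ∃ α ∈ F.Asms, A = {α} := by
  induction h with
  | assumption hα => exact ⟨_, hα, rfl⟩
  | @step φ body hr As Rs _ ih =>
    obtain ⟨α, -, hbody, -⟩ := hF _ hr
    subst hbody
    have hunion : ⋃ i, As i = As 0 := iSup_unique (ι := Fin 1) As
    exact hunion ▸ ih 0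

end ABA

theorem bipolar_attack_singleton_general {S : Type*} (F : ABA S) (hF : F.Bipolar)
    (A B : Set S)
    (h : F.Attacks A B) :
    ∃ α ∈ A, F.Attacks {α} B := by
  obtain ⟨β, hβ, A', hA', R, hR, hd⟩ := h
  obtain ⟨α, -, rfl⟩ := hd.eq_singleton_of_bipolar hF
  exact ⟨α, hA' rfl, β, hβ, {α}, subset_rfl, R, hR, hd⟩

/-- In a bipolar ABA framework, if `A` attacks `B` then some singleton
`{α}` with `α ∈ A` attacks `B`. -/
theorem bipolar_attack_singleton {S : Type*} (F : ABA S) (hF : F.Bipolar)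
    (A B : Set S) (hA : A ⊆ F.Asms) (hB : B ⊆ F.Asms)
    (h : F.Attacks A B) :
    ∃ α ∈ A, F.Attacks {α} B :=
  bipolar_attack_singleton_general F hF A B h
end

section
/- In a bipolar ABA framework F = (ℒ, ℛ, 𝒜, ¯), for all A, B ⊆ 𝒜: A attacks B if and only if there exist α ∈ A, β ∈ B and R ⊆ ℛ such that {α} ⊢^R β̄ is a deduction for the contrary of β supported by the singleton {α}. -/
namespace ABA

variable {S : Type*} {F : ABA S}

theorem Bipolar.length_body_eq_one (hF : F.Bipolar) {r : S × List S} (hr : r ∈ F.Rules) :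
    r.2.length = 1 := by
  obtain ⟨α, -, hbody, -⟩ := hF r hr
  simp [hbody]

/-- When every rule has exactly one premise, a deduction tree is a path, so it has a single
leaf. -/
theorem Deduces.exists_eq_singleton (hunary : ∀ r ∈ F.Rules, r.2.length = 1) {A : Set S}
    {R : Set (S × List S)} {φ : S} (h : F.Deduces A R φ) : ∃ α, A = {α} := by
  induction h with
  | assumption => exact ⟨_, rfl⟩
  | step hr As _ _ ih =>
    have hlen := hunary _ hr
    have : Subsingleton (Fin _) := Fin.subsingleton_iff_le_one.2 hlen.le
    obtain ⟨α, hα⟩ := ih ⟨0, by simp [hlen]⟩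
    exact ⟨α, by rw [← hα]; exact ciSup_subsingleton _ As⟩

end ABA

theorem bipolar_attacks_iff_singleton_deduction_general {S : Type*} (F : ABA S) (hF : F.Bipolar)
    (A B : Set S) :
    F.Attacks A B ↔
      ∃ α ∈ A, ∃ β ∈ B, ∃ R ⊆ F.Rules, F.Deduces {α} R (F.contrary β) := by
  constructor
  · rintro ⟨β, hβ, A', hA', R, hR, hd⟩
    obtain ⟨α, rfl⟩ := hd.exists_eq_singleton fun _ ↦ hF.length_body_eq_one
    exact ⟨α, hA' rfl, β, hβ, R, hR, hd⟩
  · rintro ⟨α, hα, β, hβ, R, hR, hd⟩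
    exact ⟨β, hβ, {α}, Set.singleton_subset_iff.2 hα, R, hR, hd⟩

/-- In a bipolar ABA framework, `A` attacks `B` iff some singleton `{α}`
with `α ∈ A` supports a deduction of the contrary of some `β ∈ B`. -/
theorem bipolar_attacks_iff_singleton_deduction {S : Type*} (F : ABA S) (hF : F.Bipolar)
    (A B : Set S) (hA : A ⊆ F.Asms) (hB : B ⊆ F.Asms) :
    F.Attacks A B ↔
      ∃ α ∈ A, ∃ β ∈ B, ∃ R ⊆ F.Rules, F.Deduces {α} R (F.contrary β) :=
  bipolar_attacks_iff_singleton_deduction_general F hF A B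
end

section
/- Every bipolar ABA framework F = (ℒ, ℛ, 𝒜, ¯) with 𝒜 finite has a preferred extension. -/
/-!
Bipolar rules have a single assumption as body, so every deduction rests on at least one
assumption. Hence nothing is derivable from `∅`, which makes `∅` closed and therefore
admissible; as `𝒜` is finite, some admissible extension is `⊆`-maximal.
-/

namespace ABA

variable {S : Type*} {F : ABA S}

lemma Bipolar.body_ne_nil (hF : F.Bipolar) {r : S × List S} (hr : r ∈ F.Rules) :
    r.2 ≠ [] := by
  obtain ⟨α, -, hbody, -⟩ := hF r hr
  simp [hbody]

lemma Deduces.support_nonempty (hbody : ∀ r ∈ F.Rules, r.2 ≠ [])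
    {A : Set S} {R : Set (S × List S)} {φ : S} (h : F.Deduces A R φ) : A.Nonempty := by
  induction h with
  | assumption => exact Set.singleton_nonempty _
  | @step _ body hr As _ _ ih =>
    have hlen : 0 < body.length := List.length_pos_iff.2 (hbody _ hr)
    exact (ih ⟨0, hlen⟩).mono (Set.subset_iUnion As ⟨0, hlen⟩)

lemma closed_empty (hbody : ∀ r ∈ F.Rules, r.2 ≠ []) : F.Closed ∅ := by
  refine Set.eq_empty_of_forall_notMem ?_
  rintro _ ⟨-, A', hA', R, -, hd⟩
  obtain ⟨a, ha⟩ := hd.support_nonempty hbody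
  exact hA' ha

lemma admissible_empty (h : F.Closed ∅) : F.Admissible ∅ :=
  ⟨Set.empty_subset _, h, fun ⟨_, hβ, _⟩ => hβ, fun _ hα => hα.elim⟩

lemma Admissible.exists_preferred_superset (hfin : F.Asms.Finite) {E : Set S}
    (hE : F.Admissible E) : ∃ E', F.Preferred E' ∧ E ⊆ E' := by
  have hfinite : {E : Set S | F.Admissible E}.Finite :=
    hfin.finite_subsets.subset fun _ hE => hE.1
  obtain ⟨E', hEE', hE', hmax⟩ := hfinite.exists_le_maximal hE
  exact ⟨E', ⟨hE', fun E'' hE'' hsub => (hmax hE'' hsub).antisymm hsub⟩, hEE'⟩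

end ABA

/-- Every bipolar ABA framework with finitely many assumptions has a
preferred extension. -/
theorem bipolar_preferred_exists {S : Type*} (F : ABA S) (hF : F.Bipolar)
    (hfin : F.Asms.Finite) :
    ∃ E : Set S, F.Preferred E := by
  have hempty : F.Admissible ∅ :=
    ABA.admissible_empty (ABA.closed_empty fun _ hr => hF.body_ne_nil hr)
  obtain ⟨E, hE, -⟩ := hempty.exists_preferred_superset hfin
  exact ⟨E, hE⟩
end
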